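/- Let Z = X·Z₀ where X is the permutation matrix of (1 2)(3 4) and Z₀ = [[0,0,4,0],[0,0,0,0],[4,4,0,0],[2,2,0,0]]. Then for every m ≥ 0, Z^{2m+1} = [[0,0,0,0],[0,0,4·8^m,0],[2·8^m,2·8^m,0,0],[4·8^m,4·8^m,0,0]]. -/
import Mathlib

theorem stmt_19 (m : ℕ)
    (X : Matrix (Fin 4) (Fin 4) ℤ) (hX : X = !![0,1,0,0; 1,0,0,0; 0,0,0,1; 0,0,1,0])
    (Z₀ : Matrix (Fin 4) (Fin 4) ℤ) (hZ₀ : Z₀ = !![0,0,4,0; 0,0,0,0; 4,4,0,0; 2,2,0,0])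
    (Z : Matrix (Fin 4) (Fin 4) ℤ) (hZ : Z = X * Z₀) :
    Z ^ (2 * m + 1) =
      !![0, 0, 0, 0;
         0, 0, 4 * 8 ^ m, 0;
         2 * 8 ^ m, 2 * 8 ^ m, 0, 0;
         4 * 8 ^ m, 4 * 8 ^ m, 0, 0] := by
  have hW : Z = !![0,0,0,0; 0,0,4,0; 2,2,0,0; 4,4,0,0] := by
    subst hX hZ₀ hZ
    ext i j
    fin_cases i <;> fin_cases j <;>
      simp [Matrix.mul_apply, Fin.sum_univ_four, Matrix.vecHead, Matrix.vecTail]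
  clear hX hZ₀ hZ
  have hZ2 : Z ^ 2 = !![0,0,0,0; 8,8,0,0; 0,0,8,0; 0,0,16,0] := by
    rw [pow_two, hW]
    ext i j
    fin_cases i <;> fin_cases j <;>
      simp [Matrix.mul_apply, Fin.sum_univ_four, Matrix.vecHead, Matrix.vecTail]
  induction m with
  | zero =>
    simpa using hW
  | succ n ih =>
    have h : 2 * (n + 1) + 1 = (2 * n + 1) + 2 := by ring
    rw [h, pow_add, ih, hZ2]
    ext i j
    fin_cases i <;> fin_cases j <;>
      simp [Matrix.mul_apply, Fin.sum_univ_four, Matrix.vecHead, Matrix.vecTail] <;> ring
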